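/- Let G be a pair of d-dimensional layer-permuted butterflies with left layer permutation π and right layer permutation σ; fix q ≤ d and m = d − q, with q ≥ 1. Suppose (one reused dimension) there is exactly one bit position i such that one of the following holds: (a) π(m+1) = σ(q) = i; (b) σ(q) = π(j) = i for some 1 ≤ j ≤ m+1 and π(m+1) ∉ {σ(q), …, σ(d)}; or (c) π(m+1) = σ(k) = i for some k ∈ {q, …, d} and σ(q) ∉ {π(1), …, π(m+1)}. Then for every connected component C of the q-dimensional sub-butterfly connectivity graph, the set of children of the vertices of C (each left vertex x* has children x0* and x1*, fixing bit π(m+1); each right vertex *y has children *0y and *1y, fixing bit σ(q)) splits into exactly two connected components of the (q−1)-dimensional sub-butterfly connectivity graph, determined by the value of bit i. -/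

import Mathlib

/-- A binary string of length `d`. -/
abbrev BStr (d : ℕ) := Fin d → Bool

/-- The string `b` lies in the left sub-butterfly `x*` of a pair of
`d`-dimensional layer-permuted butterflies with left layer permutation `π`
(written `0`-based): bit `π i` of `b` equals `x i` for all `i < m = d - q`. -/
def leftSubMem (d q : ℕ) (π : Equiv.Perm (Fin d))
    (x : Fin (d - q) → Bool) (b : BStr d) : Prop :=
  ∀ i : Fin (d - q), b (π (Fin.castLE (Nat.sub_le d q) i)) = x i

/-- The string `b` lies in the right sub-butterfly `*y` of a pair of
`d`-dimensional layer-permuted butterflies with right layer permutation `σ`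
(written `0`-based): bit `σ (q + j)` of `b` equals `y j` for all
`j < m = d - q`. -/
def rightSubMem (d q : ℕ) (hq : q ≤ d) (σ : Equiv.Perm (Fin d))
    (y : Fin (d - q) → Bool) (b : BStr d) : Prop :=
  ∀ j : Fin (d - q), b (σ (Fin.castLE (by omega) (Fin.natAdd q j))) = y j

/-- The left sub-butterfly `x*` and the right sub-butterfly `*y` share at least
one node on layer `d`. -/
def connRel (d q : ℕ) (hq : q ≤ d) (π σ : Equiv.Perm (Fin d))
    (x y : Fin (d - q) → Bool) : Prop :=
  ∃ b : BStr d, leftSubMem d q π x b ∧ rightSubMem d q hq σ y b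

/-- The `q`-dimensional sub-butterfly connectivity graph of a pair of
`d`-dimensional layer-permuted butterflies: a bipartite graph whose left
vertices (`Sum.inl`) are the `2^m` left sub-butterflies `x*` and whose right
vertices (`Sum.inr`) are the `2^m` right sub-butterflies `*y`, adjacent iff
the two sub-butterflies share a node on layer `d`. -/
def connGraph (d q : ℕ) (hq : q ≤ d) (π σ : Equiv.Perm (Fin d)) :
    SimpleGraph ((Fin (d - q) → Bool) ⊕ (Fin (d - q) → Bool)) where
  Adj u v :=
    (∃ x y, u = Sum.inl x ∧ v = Sum.inr y ∧ connRel d q hq π σ x y) ∨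
    (∃ x y, u = Sum.inr y ∧ v = Sum.inl x ∧ connRel d q hq π σ x y)
  symm := by
    constructor
    rintro u v (⟨x, y, rfl, rfl, h⟩ | ⟨x, y, rfl, rfl, h⟩)
    · exact Or.inr ⟨x, y, rfl, rfl, h⟩
    · exact Or.inl ⟨x, y, rfl, rfl, h⟩
  loopless := by
    constructor
    rintro u (⟨x, y, h1, h2, -⟩ | ⟨x, y, h1, h2, -⟩) <;> subst h1 <;> simp at h2

/-- The child `x0*` or `x1*` (according to `t`) of the left sub-butterfly `x*`:
the `(q-1)`-dimensional left sub-butterfly obtained by additionally fixing bit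
`π (m+1)` (`0`-based: `π m`, `m = d - q`) to the value `t`. -/
def childL (d q : ℕ) (x : Fin (d - q) → Bool) (t : Bool) :
    Fin (d - (q - 1)) → Bool :=
  fun i => if h : (i : ℕ) < d - q then x ⟨i, h⟩ else t

/-- The child `*0y` or `*1y` (according to `t`) of the right sub-butterfly
`*y`: the `(q-1)`-dimensional right sub-butterfly obtained by additionally
fixing bit `σ q` (`0`-based: `σ (q-1)`) to the value `t`. -/
def childR (d q : ℕ) (y : Fin (d - q) → Bool) (t : Bool) :
    Fin (d - (q - 1)) → Bool :=
  fun j => if h : 0 < (j : ℕ) then y ⟨(j : ℕ) - 1, by have := j.isLt; omega⟩ else t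

/-- The child (according to `t`) of a vertex of the `q`-dimensional
sub-butterfly connectivity graph, as a vertex of the `(q-1)`-dimensional one. -/
def childV (d q : ℕ) :
    ((Fin (d - q) → Bool) ⊕ (Fin (d - q) → Bool)) → Bool →
      ((Fin (d - (q - 1)) → Bool) ⊕ (Fin (d - (q - 1)) → Bool))
  | Sum.inl x, t => Sum.inl (childL d q x t)
  | Sum.inr y, t => Sum.inr (childR d q y t)

/-- The value of physical bit `i` on a left `(q-1)`-dimensional sub-butterfly
`x'` (entry `s` of `x'` fixes bit `π s`), when bit `i` is among the fixed
bits; junk value `false` otherwise. -/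
def bitValL (d q : ℕ) (π : Equiv.Perm (Fin d)) (i : Fin d)
    (x' : Fin (d - (q - 1)) → Bool) : Bool :=
  if h : ((π.symm i : Fin d) : ℕ) < d - (q - 1) then
    x' ⟨((π.symm i : Fin d) : ℕ), h⟩ else false

/-- The value of physical bit `i` on a right `(q-1)`-dimensional sub-butterfly
`y'` (entry `j` of `y'` fixes bit `σ ((q-1) + j)`), when bit `i` is among the
fixed bits; junk value `false` otherwise. -/
def bitValR (d q : ℕ) (σ : Equiv.Perm (Fin d)) (i : Fin d)
    (y' : Fin (d - (q - 1)) → Bool) : Bool :=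
  if h : q - 1 ≤ ((σ.symm i : Fin d) : ℕ) ∧
      ((σ.symm i : Fin d) : ℕ) - (q - 1) < d - (q - 1) then
    y' ⟨((σ.symm i : Fin d) : ℕ) - (q - 1), h.2⟩ else false

/-- The value of physical bit `i` on a vertex of the `(q-1)`-dimensional
sub-butterfly connectivity graph. -/
def bitVal (d q : ℕ) (π σ : Equiv.Perm (Fin d)) (i : Fin d) :
    ((Fin (d - (q - 1)) → Bool) ⊕ (Fin (d - (q - 1)) → Bool)) → Bool
  | Sum.inl x' => bitValL d q π i x'
  | Sum.inr y' => bitValR d q σ i y'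

/-!
Call a bit *shared* at dimension `q` if it is fixed both by the left sub-butterflies `x*` and
by the right sub-butterflies `*y`. Two such sub-butterflies meet on layer `d` iff they agree on
the shared bits, so the left and right vertices with a given assignment of the shared bits form
a complete bipartite graph, and the connected components are exactly the classes of these
assignments. Passing from `q` to `q - 1` fixes one more bit on each side (`π (m+1)` on the
left, `σ q` on the right), and each of the cases (a), (b), (c) says that exactly one new bit,
namely `i`, becomes shared. The children of a component are therefore the vertices with the
component's old shared values, and they fall into two components according to bit `i`.
-/

namespace Set

variable {α β : Type*}

lemma exists_eqOn_and_eqOn_iff {f g : α → β} {A B : Set α} :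
    (∃ b, EqOn f b A ∧ EqOn g b B) ↔ EqOn f g (A ∩ B) := by
  classical
  refine ⟨fun ⟨b, hf, hg⟩ p hp => (hf hp.1).trans (hg hp.2).symm, fun h => ?_⟩
  refine ⟨A.piecewise f g, (piecewise_eqOn A f g).symm, fun p hB => ?_⟩
  by_cases hA : p ∈ A
  · rw [piecewise_eq_of_mem _ _ _ hA, h ⟨hA, hB⟩]
  · rw [piecewise_eq_of_notMem _ _ _ hA]

lemma eqOn_insert_update_iff [DecidableEq α] {f g : α → β} {s : Set α} {a : α} (b : β)
    (ha : a ∉ s) :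
    EqOn f (Function.update g a b) (insert a s) ↔ f a = b ∧ EqOn f g s := by
  rw [insert_eq, eqOn_union, eqOn_singleton, Function.update_self]
  refine and_congr_right fun _ => forall₂_congr fun p hp => ?_
  rw [Function.update_of_ne (ne_of_mem_of_not_mem hp ha)]

lemma insert_inter_insert_eq_insert {L R : Set α} {a b i : α} (ha : a ∉ L) (hb : b ∉ R)
    (h : (a = i ∧ b = i) ∨ (i ∈ insert a L ∧ b = i ∧ a ∉ insert b R) ∨
      (i ∈ insert b R ∧ a = i ∧ b ∉ insert a L)) :
    insert a L ∩ insert b R = insert i (L ∩ R) ∧ i ∉ L ∩ R := by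
  rcases h with ⟨rfl, rfl⟩ | ⟨hiL, rfl, haR⟩ | ⟨hiR, rfl, hbL⟩
  · exact ⟨(insert_inter_distrib _ _ _).symm, fun h => ha h.1⟩
  · have hbL : b ∈ L := (mem_insert_iff.1 hiL).resolve_left (by rintro rfl; simp at haR)
    exact ⟨by rw [insert_inter_of_notMem haR, inter_insert_of_mem hbL], fun h => hb h.2⟩
  · have haR : a ∈ R := (mem_insert_iff.1 hiR).resolve_left (by rintro rfl; simp at hbL)
    refine ⟨?_, fun h => ha h.1⟩
    rw [inter_comm, insert_inter_of_notMem hbL, inter_insert_of_mem haR, inter_comm]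

end Set

namespace SubButterfly

open Set

def leftFixed (d q' : ℕ) (π : Equiv.Perm (Fin d)) : Set (Fin d) :=
  {p | ((π.symm p : Fin d) : ℕ) < d - q'}

def rightFixed (d q' : ℕ) (σ : Equiv.Perm (Fin d)) : Set (Fin d) :=
  {p | q' ≤ ((σ.symm p : Fin d) : ℕ)}

def sharedBits (d q' : ℕ) (π σ : Equiv.Perm (Fin d)) : Set (Fin d) :=
  leftFixed d q' π ∩ rightFixed d q' σ

/-- The value that the left sub-butterfly `x*` fixes at bit `p` (junk `false` at the bits it
leaves free). -/
def leftBits (d q' : ℕ) (π : Equiv.Perm (Fin d)) (x : Fin (d - q') → Bool) (p : Fin d) :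
    Bool :=
  if h : ((π.symm p : Fin d) : ℕ) < d - q' then x ⟨_, h⟩ else false

def rightBits (d q' : ℕ) (σ : Equiv.Perm (Fin d)) (y : Fin (d - q') → Bool) (p : Fin d) :
    Bool :=
  if h : q' ≤ ((σ.symm p : Fin d) : ℕ) then
    y ⟨((σ.symm p : Fin d) : ℕ) - q', by have := (σ.symm p).isLt; omega⟩
  else false

def vertexBits (d q' : ℕ) (π σ : Equiv.Perm (Fin d)) :
    ((Fin (d - q') → Bool) ⊕ (Fin (d - q') → Bool)) → Fin d → Bool :=
  Sum.elim (leftBits d q' π) (rightBits d q' σ)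

def leftOfBits (d q' : ℕ) (π : Equiv.Perm (Fin d)) (g : Fin d → Bool) :
    Fin (d - q') → Bool :=
  fun k => g (π (Fin.castLE (Nat.sub_le d q') k))

def rightOfBits (d q' : ℕ) (σ : Equiv.Perm (Fin d)) (g : Fin d → Bool) :
    Fin (d - q') → Bool :=
  fun j => g (σ ⟨q' + (j : ℕ), by have := j.isLt; omega⟩)

variable {d : ℕ}

section Bits

variable {q' : ℕ} {π σ : Equiv.Perm (Fin d)}

lemma leftBits_leftOfBits (g : Fin d → Bool) :
    EqOn (leftBits d q' π (leftOfBits d q' π g)) g (leftFixed d q' π) := by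
  intro p (hp : ((π.symm p : Fin d) : ℕ) < d - q')
  simp [leftBits, leftOfBits, hp]

lemma rightBits_rightOfBits (g : Fin d → Bool) :
    EqOn (rightBits d q' σ (rightOfBits d q' σ g)) g (rightFixed d q' σ) := by
  intro p (hp : q' ≤ ((σ.symm p : Fin d) : ℕ))
  have hidx : (⟨q' + (((σ.symm p : Fin d) : ℕ) - q'), by omega⟩ : Fin d) = σ.symm p :=
    Fin.ext (by simp only; omega)
  simp only [rightBits, rightOfBits, dif_pos hp, hidx, Equiv.apply_symm_apply]

lemma leftFixed_eq_range :
    leftFixed d q' π = range fun k : Fin (d - q') => π (Fin.castLE (Nat.sub_le d q') k) := by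
  ext p
  refine ⟨fun (hp : _ < d - q') => ⟨⟨_, hp⟩, ?_⟩, ?_⟩
  · dsimp only
    rw [show Fin.castLE _ ⟨_, hp⟩ = π.symm p from Fin.ext rfl, Equiv.apply_symm_apply]
  · rintro ⟨k, rfl⟩
    simp [leftFixed]

lemma rightFixed_eq_range (hq : q' ≤ d) :
    rightFixed d q' σ =
      range fun j : Fin (d - q') => σ (Fin.castLE (by omega) (Fin.natAdd q' j)) := by
  ext p
  refine ⟨fun (hp : q' ≤ _) => ⟨⟨(σ.symm p : ℕ) - q', by omega⟩, ?_⟩, ?_⟩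
  · dsimp only
    rw [show Fin.castLE _ (Fin.natAdd q' _) = σ.symm p from Fin.ext (by simp; omega),
      Equiv.apply_symm_apply]
  · rintro ⟨j, rfl⟩
    simp [rightFixed]

lemma mem_rightFixed_iff (p : Fin d) :
    p ∈ rightFixed d q' σ ↔ ∃ k : Fin d, q' ≤ (k : ℕ) ∧ σ k = p :=
  ⟨fun hp => ⟨σ.symm p, hp, σ.apply_symm_apply p⟩,
    by rintro ⟨k, hk, rfl⟩; simpa [rightFixed] using hk⟩

lemma leftBits_apply (x : Fin (d - q') → Bool) (k : Fin (d - q')) :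
    leftBits d q' π x (π (Fin.castLE (Nat.sub_le d q') k)) = x k := by
  simp [leftBits]

lemma rightBits_apply (hq : q' ≤ d) (y : Fin (d - q') → Bool) (j : Fin (d - q')) :
    rightBits d q' σ y (σ (Fin.castLE (by omega) (Fin.natAdd q' j))) = y j := by
  simp [rightBits]

lemma leftSubMem_iff_eqOn (x : Fin (d - q') → Bool) (b : BStr d) :
    leftSubMem d q' π x b ↔ EqOn (leftBits d q' π x) b (leftFixed d q' π) := by
  simp only [leftFixed_eq_range, eqOn_range, funext_iff, Function.comp_apply, leftBits_apply,
    leftSubMem, eq_comm]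

lemma rightSubMem_iff_eqOn (hq : q' ≤ d) (y : Fin (d - q') → Bool) (b : BStr d) :
    rightSubMem d q' hq σ y b ↔ EqOn (rightBits d q' σ y) b (rightFixed d q' σ) := by
  simp only [rightFixed_eq_range hq, eqOn_range, funext_iff, Function.comp_apply,
    rightBits_apply hq, rightSubMem, eq_comm]

lemma connRel_iff_eqOn (hq : q' ≤ d) (x y : Fin (d - q') → Bool) :
    connRel d q' hq π σ x y ↔
      EqOn (leftBits d q' π x) (rightBits d q' σ y) (sharedBits d q' π σ) := by
  simp only [connRel, leftSubMem_iff_eqOn, rightSubMem_iff_eqOn hq]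
  exact exists_eqOn_and_eqOn_iff

end Bits

section Components

variable {q' : ℕ} (hq : q' ≤ d) {π σ : Equiv.Perm (Fin d)}

lemma connGraph_adj_inl_inr (x y : Fin (d - q') → Bool) :
    (connGraph d q' hq π σ).Adj (Sum.inl x) (Sum.inr y) ↔
      EqOn (leftBits d q' π x) (rightBits d q' σ y) (sharedBits d q' π σ) := by
  simp [connGraph, connRel_iff_eqOn hq]

lemma eqOn_vertexBits_of_reachable {u v} (h : (connGraph d q' hq π σ).Reachable u v) :
    EqOn (vertexBits d q' π σ u) (vertexBits d q' π σ v) (sharedBits d q' π σ) := by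
  rw [SimpleGraph.reachable_iff_reflTransGen] at h
  induction h with
  | refl => exact eqOn_refl _ _
  | tail _ hadj ih =>
    refine ih.trans ?_
    rcases hadj with ⟨x, y, rfl, rfl, hxy⟩ | ⟨x, y, rfl, rfl, hxy⟩
    · exact (connRel_iff_eqOn hq x y).1 hxy
    · exact ((connRel_iff_eqOn hq x y).1 hxy).symm

/-- A left vertex with shared bits `g` reaches `leftOfBits g` through `rightOfBits g`; a right
one is adjacent to it. -/
lemma reachable_inl_leftOfBits {g : Fin d → Bool} {w}
    (hw : EqOn (vertexBits d q' π σ w) g (sharedBits d q' π σ)) :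
    (connGraph d q' hq π σ).Reachable (Sum.inl (leftOfBits d q' π g)) w := by
  have hL : EqOn (leftBits d q' π (leftOfBits d q' π g)) g (sharedBits d q' π σ) :=
    (leftBits_leftOfBits g).mono inter_subset_left
  have hR : EqOn (rightBits d q' σ (rightOfBits d q' σ g)) g (sharedBits d q' π σ) :=
    (rightBits_rightOfBits g).mono inter_subset_right
  rcases w with x | y
  · have hLR := (connGraph_adj_inl_inr hq _ _).2 (hL.trans hR.symm)
    have hxR := (connGraph_adj_inl_inr hq x _).2 (hw.trans hR.symm)
    exact hLR.reachable.trans hxR.reachable.symm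
  · exact ((connGraph_adj_inl_inr hq _ y).2 (hL.trans hw.symm)).reachable

variable (π σ) in
def componentOfBits (g : Fin d → Bool) : (connGraph d q' hq π σ).ConnectedComponent :=
  (connGraph d q' hq π σ).connectedComponentMk (Sum.inl (leftOfBits d q' π g))

lemma mem_supp_componentOfBits_iff (g : Fin d → Bool) (w) :
    w ∈ (componentOfBits hq π σ g).supp ↔
      EqOn (vertexBits d q' π σ w) g (sharedBits d q' π σ) := by
  rw [SimpleGraph.ConnectedComponent.mem_supp_iff, componentOfBits,
    SimpleGraph.ConnectedComponent.eq]
  refine ⟨fun h => (eqOn_vertexBits_of_reachable hq h).trans ?_,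
    fun h => (reachable_inl_leftOfBits hq h).symm⟩
  exact (leftBits_leftOfBits g).mono inter_subset_left

lemma connectedComponentMk_eq_componentOfBits (u) :
    (connGraph d q' hq π σ).connectedComponentMk u =
      componentOfBits hq π σ (vertexBits d q' π σ u) :=
  (mem_supp_componentOfBits_iff hq _ u).2 (eqOn_refl _ _)

lemma componentOfBits_eq_iff (g g' : Fin d → Bool) :
    componentOfBits hq π σ g = componentOfBits hq π σ g' ↔
      EqOn g g' (sharedBits d q' π σ) := by
  have hL : ∀ g, EqOn (vertexBits d q' π σ (.inl (leftOfBits d q' π g))) g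
      (sharedBits d q' π σ) := fun g => (leftBits_leftOfBits g).mono inter_subset_left
  refine ⟨fun h => (hL g).symm.trans ?_, fun h => ?_⟩
  · exact (mem_supp_componentOfBits_iff hq g' _).1 h
  · exact SimpleGraph.ConnectedComponent.sound
      (reachable_inl_leftOfBits hq ((hL g').trans h.symm))

end Components

section Children

variable {q : ℕ} (hq1 : 1 ≤ q) (hqd : q ≤ d) {π σ : Equiv.Perm (Fin d)}
include hq1

lemma vertexBits_childV (u) (t : Bool) :
    EqOn (vertexBits d (q - 1) π σ (childV d q u t)) (vertexBits d q π σ u)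
      (sharedBits d q π σ) := by
  rintro p ⟨hpL : _ < d - q, hpR : q ≤ _⟩
  rcases u with x | y
  · have hpL' : ((π.symm p : Fin d) : ℕ) < d - (q - 1) := by omega
    simp [vertexBits, childV, leftBits, childL, hpL, hpL']
  · have hpR' : q - 1 ≤ ((σ.symm p : Fin d) : ℕ) := by omega
    have hidx : 0 < ((σ.symm p : Fin d) : ℕ) - (q - 1) := by omega
    simp only [vertexBits, childV, Sum.elim_inr, rightBits, childR, hpR, hpR', dif_pos, hidx]
    congr 2
    omega

include hqd

lemma exists_childV_eq (w) : ∃ u t, childV d q u t = w := by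
  rcases w with x' | y'
  · refine ⟨.inl fun k => x' ⟨k, by omega⟩, x' ⟨d - q, by omega⟩, congrArg Sum.inl ?_⟩
    funext j
    by_cases h : (j : ℕ) < d - q
    · simp [childL, h]
    · simp only [childL, dif_neg h]
      congr
      omega
  · refine ⟨.inr fun k => y' ⟨k + 1, by omega⟩, y' ⟨0, by omega⟩, congrArg Sum.inr ?_⟩
    funext j
    by_cases h : 0 < (j : ℕ)
    · simp only [childR, dif_pos h]
      congr
      omega
    · simp only [childR, dif_neg h]
      exact congrArg y' (Fin.ext (Nat.eq_zero_of_not_pos h).symm)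

lemma exists_mem_supp_childV_eq_iff (g : Fin d → Bool) (w) :
    (∃ u ∈ (componentOfBits hqd π σ g).supp, ∃ t, w = childV d q u t) ↔
      EqOn (vertexBits d (q - 1) π σ w) g (sharedBits d q π σ) := by
  simp only [mem_supp_componentOfBits_iff]
  refine ⟨?_, fun hw => ?_⟩
  · rintro ⟨u, hu, t, rfl⟩
    exact (vertexBits_childV hq1 u t).trans hu
  · obtain ⟨u, t, rfl⟩ := exists_childV_eq hq1 hqd w
    exact ⟨u, (vertexBits_childV hq1 u t).symm.trans hw, t, rfl⟩

end Children

section Levels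

variable {q : ℕ} {π σ : Equiv.Perm (Fin d)} {a b : Fin d}

lemma mem_leftFixed_sub_one_iff (hq1 : 1 ≤ q) (hqd : q ≤ d) (p : Fin d) :
    p ∈ leftFixed d (q - 1) π ↔ ∃ k : Fin d, (k : ℕ) ≤ d - q ∧ π k = p := by
  refine ⟨fun (hp : ((π.symm p : Fin d) : ℕ) < d - (q - 1)) =>
    ⟨π.symm p, by omega, π.apply_symm_apply p⟩, ?_⟩
  rintro ⟨k, hk, rfl⟩
  simp only [leftFixed, mem_ofPred_eq, Equiv.symm_apply_apply]
  omega

lemma leftFixed_sub_one (hq1 : 1 ≤ q) (hqd : q ≤ d) (ha : (a : ℕ) = d - q) :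
    leftFixed d (q - 1) π = insert (π a) (leftFixed d q π) := by
  ext p
  simp only [leftFixed, mem_insert_iff, mem_ofPred_eq, ← Equiv.symm_apply_eq, Fin.ext_iff, ha]
  omega

lemma rightFixed_sub_one (hq1 : 1 ≤ q) (hb : (b : ℕ) = q - 1) :
    rightFixed d (q - 1) σ = insert (σ b) (rightFixed d q σ) := by
  ext p
  simp only [rightFixed, mem_insert_iff, mem_ofPred_eq, ← Equiv.symm_apply_eq, Fin.ext_iff, hb]
  omega

lemma apply_notMem_leftFixed (ha : (a : ℕ) = d - q) : π a ∉ leftFixed d q π := by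
  simp [leftFixed, ha]

lemma apply_notMem_rightFixed (hq1 : 1 ≤ q) (hb : (b : ℕ) = q - 1) :
    σ b ∉ rightFixed d q σ := by
  simp only [rightFixed, mem_ofPred_eq, Equiv.symm_apply_apply, hb]
  omega

lemma sharedBits_sub_one_eq_insert (hq1 : 1 ≤ q) (hqd : q ≤ d) (ha : (a : ℕ) = d - q)
    (hb : (b : ℕ) = q - 1) (i : Fin d)
    (hi : (π a = i ∧ σ b = i) ∨
      ((∃ k : Fin d, (k : ℕ) ≤ d - q ∧ π k = i) ∧ σ b = i ∧
        (∀ k : Fin d, q - 1 ≤ (k : ℕ) → σ k ≠ π a)) ∨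
      ((∃ k : Fin d, q - 1 ≤ (k : ℕ) ∧ σ k = i) ∧ π a = i ∧
        (∀ k : Fin d, (k : ℕ) ≤ d - q → π k ≠ σ b))) :
    sharedBits d (q - 1) π σ = insert i (sharedBits d q π σ) ∧
      i ∉ sharedBits d q π σ := by
  simp only [Ne, ← not_and, ← not_exists, ← mem_leftFixed_sub_one_iff hq1 hqd,
    ← mem_rightFixed_iff, leftFixed_sub_one hq1 hqd ha, rightFixed_sub_one hq1 hb] at hi
  rw [sharedBits, leftFixed_sub_one hq1 hqd ha, rightFixed_sub_one hq1 hb]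
  exact insert_inter_insert_eq_insert (apply_notMem_leftFixed ha)
    (apply_notMem_rightFixed hq1 hb) hi

end Levels

lemma bitVal_eq_vertexBits {q : ℕ} {π σ : Equiv.Perm (Fin d)} (i : Fin d) (w) :
    bitVal d q π σ i w = vertexBits d (q - 1) π σ w i := by
  rcases w with x' | y'
  · rfl
  · simp only [bitVal, bitValR, vertexBits, Sum.elim_inr, rightBits]
    by_cases h : q - 1 ≤ ((σ.symm i : Fin d) : ℕ)
    · rw [dif_pos ⟨h, by omega⟩, dif_pos h]
    · rw [dif_neg fun h' => h h'.1, dif_neg h]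

end SubButterfly

open SubButterfly

/-- one reused dimension: suppose `i` is the unique bit position
satisfying one of (`0`-based translations of the paper's `1`-based cases):
(a) `π (m+1) = σ q = i`; (b) `σ q = π j = i` for some `j ≤ m+1` and
`π (m+1) ∉ {σ q, …, σ d}`; (c) `π (m+1) = σ k = i` for some `k ∈ {q, …, d}`
and `σ q ∉ {π 1, …, π (m+1)}`.  Then for every connected component `C` of the
`q`-dimensional sub-butterfly connectivity graph, the children of the vertices
of `C` split into exactly two connected components of the `(q-1)`-dimensional
connectivity graph, determined by the value of bit `i`. -/
theorem connectivity_graph_component_one_reused_dimension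
    (d q : ℕ) (hq1 : 1 ≤ q) (hqd : q ≤ d) (π σ : Equiv.Perm (Fin d))
    (i : Fin d)
    (hi : (π ⟨d - q, by omega⟩ = i ∧ σ ⟨q - 1, by omega⟩ = i) ∨
      ((∃ k : Fin d, (k : ℕ) ≤ d - q ∧ π k = i) ∧ σ ⟨q - 1, by omega⟩ = i ∧
        (∀ k : Fin d, q - 1 ≤ (k : ℕ) → σ k ≠ π ⟨d - q, by omega⟩)) ∨
      ((∃ k : Fin d, q - 1 ≤ (k : ℕ) ∧ σ k = i) ∧ π ⟨d - q, by omega⟩ = i ∧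
        (∀ k : Fin d, (k : ℕ) ≤ d - q → π k ≠ σ ⟨q - 1, by omega⟩))) :
    ∀ C : (connGraph d q hqd π σ).ConnectedComponent,
      ∃ f : Bool → (connGraph d (q - 1) (by omega) π σ).ConnectedComponent,
        Function.Injective f ∧
        (∀ w, (∃ u ∈ C.supp, ∃ t : Bool, w = childV d q u t) ↔
          ∃ s : Bool, w ∈ (f s).supp) ∧
        (∀ w, (∃ u ∈ C.supp, ∃ t : Bool, w = childV d q u t) →
          ∀ s : Bool, (w ∈ (f s).supp ↔ bitVal d q π σ i w = s)) := by
  obtain ⟨hshared, hi_notMem⟩ := sharedBits_sub_one_eq_insert hq1 hqd rfl rfl i hi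
  refine SimpleGraph.ConnectedComponent.ind fun u₀ => ?_
  rw [connectedComponentMk_eq_componentOfBits]
  set g := vertexBits d q π σ u₀
  refine ⟨fun s => componentOfBits (by omega) π σ (Function.update g i s), fun s s' h => ?_,
    ?_, ?_⟩
  · rw [componentOfBits_eq_iff, hshared] at h
    simpa using h (Set.mem_insert i _)
  all_goals simp only [exists_mem_supp_childV_eq_iff hq1 hqd]
  all_goals simp only [mem_supp_componentOfBits_iff, hshared,
    Set.eqOn_insert_update_iff _ hi_notMem, bitVal_eq_vertexBits]
  · exact fun w => ⟨fun hw => ⟨_, rfl, hw⟩, fun ⟨_, _, hw⟩ => hw⟩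
  · exact fun w hw s => and_iff_left hw
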